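/- Let μ be a nontrivial probability measure on the unit circle with normal L²-derivative behavior. Then μ is in Nevai class, that is, its Verblunsky coefficients satisfy α_n → 0 as n → ∞. -/

import Mathlib

/-!
Write `κₙ` for the leading coefficient of `φₙ`. Since `φₙ` is orthogonal to every polynomial of
lower degree, `⟪φₙ, P⟫ = P.coeff n / κₙ` whenever `deg P ≤ n`, so Cauchy–Schwarz bounds
`|P.coeff n| / |κₙ|` by `‖P‖`. For `P = φₙ₊₁'` this gives `(n + 1) |κₙ₊₁| / |κₙ| ≤ ‖φₙ₊₁'‖`.
Let `ψ = z Φₙ - Φₙ₊₁`, of degree `≤ n` with `|ψ(0)| = |αₙ|`. Its reversed polynomial has the same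
norm on the circle and top coefficient `conj ψ(0)`, so `|αₙ| / |κₙ| ≤ ‖ψ‖`. As `ψ ⊥ Φₙ₊₁` and
multiplication by `z` is an isometry of `L²(μ)`, Pythagoras gives `‖Φₙ‖² = ‖ψ‖² + ‖Φₙ₊₁‖²`, hence
`|αₙ|² + (|κₙ| / |κₙ₊₁|)² ≤ 1`. Together, `|αₙ|² ≤ 1 - ((n + 1) / ‖φₙ₊₁'‖)²`, which tends to `0`.
-/

open MeasureTheory Polynomial Filter Topology ComplexConjugate

noncomputable section

/-- The reversed (Szegő `*`-transformed) polynomial of a degree-`n` polynomial: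
`P*(z) = z^n conj(P(1/conj z))`, i.e. the coefficients are conjugated and reversed. -/
def starPoly (n : ℕ) (P : Polynomial ℂ) : Polynomial ℂ :=
  (P.map (starRingEnd ℂ)).reflect n

/-- The `L²(dμ)` norm of a polynomial. -/
def l2norm (μ : Measure ℂ) (P : Polynomial ℂ) : ℝ :=
  (∫ z, ‖P.eval z‖ ^ 2 ∂μ) ^ (1 / 2 : ℝ)

/-- `φ` is the sequence of orthonormal polynomials for the measure `μ`:
`φ n` has degree `n`, a positive (real) leading coefficient, and the family
is orthonormal in `L²(dμ)`. -/
structure IsOPUC (μ : Measure ℂ) (φ : ℕ → Polynomial ℂ) : Prop where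
  deg : ∀ n : ℕ, (φ n).degree = n
  lead_re_pos : ∀ n : ℕ, 0 < ((φ n).leadingCoeff).re
  lead_im_zero : ∀ n : ℕ, ((φ n).leadingCoeff).im = 0
  orth : ∀ m n : ℕ,
    ∫ z, conj ((φ m).eval z) * (φ n).eval z ∂μ = if m = n then 1 else 0

/-- The monic orthogonal polynomials `Φ_n` associated to the orthonormal ones. -/
def monicOP (φ : ℕ → Polynomial ℂ) (n : ℕ) : Polynomial ℂ :=
  Polynomial.C ((φ n).leadingCoeff)⁻¹ * φ n

/-- The Verblunsky coefficients `α_n = -conj (Φ_{n+1}(0))`. -/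
def verblunsky (φ : ℕ → Polynomial ℂ) (n : ℕ) : ℂ :=
  -conj ((monicOP φ (n + 1)).eval 0)

/-- The measure lives on the unit circle `∂𝔻`. -/
def OnCircle (μ : Measure ℂ) : Prop := μ (Metric.sphere (0 : ℂ) 1)ᶜ = 0

/-- The measure is nontrivial: it is not supported on any finite set
(equivalently, its support is infinite). -/
def NontrivialSupport (μ : Measure ℂ) : Prop :=
  ∀ s : Finset ℂ, μ ((↑s : Set ℂ))ᶜ ≠ 0

/-- `μ` has normal `L²`-derivative behavior: `‖φ_n'‖_{L²(dμ)} / n → 1`. -/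
def NormalBehavior (μ : Measure ℂ) (φ : ℕ → Polynomial ℂ) : Prop :=
  Tendsto (fun n : ℕ => l2norm μ (derivative (φ n)) / n) atTop (𝓝 1)

open scoped InnerProductSpace

namespace OnCircle

variable {μ : Measure ℂ}

theorem ae_norm_eq_one (hμ : OnCircle μ) : ∀ᵐ z ∂μ, ‖z‖ = 1 := by
  refine measure_mono_null (fun z hz => ?_) hμ
  simpa using hz

variable [IsFiniteMeasure μ]

theorem memLp_eval (hμ : OnCircle μ) (P : ℂ[X]) : MemLp (fun z => P.eval z) 2 μ := by
  obtain ⟨C, hC⟩ := (isCompact_sphere (0 : ℂ) 1).exists_bound_of_continuousOn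
    P.continuous.continuousOn
  refine .of_bound P.continuous.aestronglyMeasurable C ?_
  filter_upwards [hμ.ae_norm_eq_one] with z hz
  exact hC z (by simpa using hz)

def toL2 (hμ : OnCircle μ) : ℂ[X] →ₗ[ℂ] Lp ℂ 2 μ where
  toFun P := (hμ.memLp_eval P).toLp
  map_add' P Q := by
    rw [← MemLp.toLp_add, MemLp.toLp_eq_toLp_iff]
    exact ae_of_all _ fun z => eval_add
  map_smul' c P := by
    rw [RingHom.id_apply, ← MemLp.toLp_const_smul, MemLp.toLp_eq_toLp_iff]
    exact ae_of_all _ fun z => eval_smul _ _ _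

theorem toL2_ae_eq (hμ : OnCircle μ) (P : ℂ[X]) : hμ.toL2 P =ᵐ[μ] fun z => P.eval z :=
  (hμ.memLp_eval P).coeFn_toLp

theorem inner_toL2 (hμ : OnCircle μ) (P Q : ℂ[X]) :
    ⟪hμ.toL2 P, hμ.toL2 Q⟫_ℂ = ∫ z, conj (P.eval z) * Q.eval z ∂μ := by
  rw [L2.inner_def]
  refine integral_congr_ae ?_
  filter_upwards [hμ.toL2_ae_eq P, hμ.toL2_ae_eq Q] with z hP hQ
  rw [hP, hQ, RCLike.inner_apply']

theorem norm_toL2_eq_l2norm (hμ : OnCircle μ) (P : ℂ[X]) : ‖hμ.toL2 P‖ = l2norm μ P := by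
  have h := inner_self_eq_norm_sq_to_K (𝕜 := ℂ) (hμ.toL2 P)
  simp_rw [hμ.inner_toL2, RCLike.conj_mul] at h
  have h' : ((∫ z, ‖P.eval z‖ ^ 2 ∂μ : ℝ) : ℂ) = ((‖hμ.toL2 P‖ ^ 2 : ℝ) : ℂ) := by
    rw [← integral_complex_ofReal]; push_cast; exact h
  rw [l2norm, ← Real.sqrt_eq_rpow, Complex.ofReal_inj.mp h', Real.sqrt_sq (norm_nonneg _)]

theorem norm_toL2_eq_of_ae (hμ : OnCircle μ) {P Q : ℂ[X]}
    (h : ∀ᵐ z ∂μ, ‖P.eval z‖ = ‖Q.eval z‖) : ‖hμ.toL2 P‖ = ‖hμ.toL2 Q‖ := by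
  simp only [norm_toL2_eq_l2norm, l2norm]
  congr 1
  refine integral_congr_ae ?_
  filter_upwards [h] with z hz
  rw [hz]

theorem norm_toL2_X_mul (hμ : OnCircle μ) (P : ℂ[X]) : ‖hμ.toL2 (X * P)‖ = ‖hμ.toL2 P‖ := by
  refine hμ.norm_toL2_eq_of_ae ?_
  filter_upwards [hμ.ae_norm_eq_one] with z hz
  rw [eval_mul, eval_X, norm_mul, hz, one_mul]

end OnCircle

theorem coeff_starPoly_self (n : ℕ) (P : ℂ[X]) : (starPoly n P).coeff n = conj (P.coeff 0) := by
  rw [starPoly, coeff_reflect, revAt_le le_rfl, Nat.sub_self, coeff_map]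

theorem natDegree_starPoly_le {n : ℕ} {P : ℂ[X]} (hP : P.natDegree ≤ n) :
    (starPoly n P).natDegree ≤ n :=
  natDegree_reflect_le.trans (max_le le_rfl (natDegree_map_le.trans hP))

theorem norm_eval_starPoly {n : ℕ} {P : ℂ[X]} (hP : P.natDegree ≤ n) {z : ℂ} (hz : ‖z‖ = 1) :
    ‖(starPoly n P).eval z‖ = ‖P.eval z‖ := by
  have hz0 : conj z ≠ 0 := by simp [← norm_pos_iff, hz]
  let := invertibleOfNonzero hz0
  have h := eval₂_reflect_mul_pow (RingHom.id ℂ) (conj z) n (P.map (starRingEnd ℂ))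
    (natDegree_map_le.trans hP)
  rw [invOf_eq_inv, ← map_inv₀, Complex.inv_eq_conj hz, Complex.conj_conj, ← eval, ← eval,
    eval_map, eval₂_at_apply] at h
  rw [starPoly, ← RCLike.norm_conj (P.eval z), ← h, norm_mul, norm_pow, RCLike.norm_conj, hz,
    one_pow, mul_one]

theorem OnCircle.norm_toL2_starPoly {μ : Measure ℂ} [IsFiniteMeasure μ] (hμ : OnCircle μ)
    {n : ℕ} {P : ℂ[X]} (hP : P.natDegree ≤ n) : ‖hμ.toL2 (starPoly n P)‖ = ‖hμ.toL2 P‖ := by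
  refine hμ.norm_toL2_eq_of_ae ?_
  filter_upwards [hμ.ae_norm_eq_one] with z hz
  exact norm_eval_starPoly hP hz

theorem Polynomial.Monic.degree_sub_lt {R : Type*} [Ring R] [Nontrivial R] {p q : R[X]}
    (hp : p.Monic) (hq : q.Monic) (h : p.natDegree = q.natDegree) :
    (p - q).degree < p.natDegree := by
  rw [← degree_eq_natDegree hp.ne_zero]
  refine degree_sub_lt_left ?_ hp.ne_zero (by rw [hp.leadingCoeff, hq.leadingCoeff])
  rw [degree_eq_natDegree hp.ne_zero, degree_eq_natDegree hq.ne_zero, h]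

theorem monicOP_eq_smul (φ : ℕ → ℂ[X]) (n : ℕ) : monicOP φ n = (φ n).leadingCoeff⁻¹ • φ n :=
  C_mul' _ _

namespace IsOPUC

variable {μ : Measure ℂ} {φ : ℕ → ℂ[X]}

theorem natDegree_eq (hφ : IsOPUC μ φ) (n : ℕ) : (φ n).natDegree = n :=
  natDegree_eq_of_degree_eq_some (hφ.deg n)

theorem coeff_self (hφ : IsOPUC μ φ) (n : ℕ) : (φ n).coeff n = (φ n).leadingCoeff := by
  rw [leadingCoeff, hφ.natDegree_eq]

theorem leadingCoeff_ne_zero (hφ : IsOPUC μ φ) (n : ℕ) : (φ n).leadingCoeff ≠ 0 := fun h => by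
  simpa [h] using hφ.lead_re_pos n

theorem degree_sub_smul_lt (hφ : IsOPUC μ φ) {P : ℂ[X]} {n : ℕ} (hP : P.natDegree ≤ n) :
    (P - (P.coeff n / (φ n).leadingCoeff) • φ n).degree < n := by
  refine (degree_lt_iff_coeff_zero _ _).mpr fun m hm => ?_
  rcases hm.eq_or_lt with rfl | hnm
  · rw [coeff_sub, coeff_smul, hφ.coeff_self, smul_eq_mul,
      div_mul_cancel₀ _ (hφ.leadingCoeff_ne_zero n), sub_self]
  · rw [coeff_sub, coeff_smul, coeff_eq_zero_of_natDegree_lt (hP.trans_lt hnm),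
      coeff_eq_zero_of_natDegree_lt ((hφ.natDegree_eq n).trans_lt hnm), smul_zero, sub_zero]

theorem monic_monicOP (hφ : IsOPUC μ φ) (n : ℕ) : (monicOP φ n).Monic :=
  monic_C_mul_of_mul_leadingCoeff_eq_one (inv_mul_cancel₀ (hφ.leadingCoeff_ne_zero n))

theorem natDegree_monicOP (hφ : IsOPUC μ φ) (n : ℕ) : (monicOP φ n).natDegree = n := by
  rw [monicOP, natDegree_C_mul (inv_ne_zero (hφ.leadingCoeff_ne_zero n)), hφ.natDegree_eq]

theorem degree_X_mul_monicOP_sub_lt (hφ : IsOPUC μ φ) (n : ℕ) :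
    (X * monicOP φ n - monicOP φ (n + 1)).degree < ↑(n + 1) := by
  have hM := hφ.monic_monicOP n
  have hdeg : (X * monicOP φ n).natDegree = n + 1 := by
    rw [monic_X.natDegree_mul hM, natDegree_X, hφ.natDegree_monicOP, add_comm]
  have h := (monic_X.mul hM).degree_sub_lt (hφ.monic_monicOP (n + 1))
    (by rw [hdeg, hφ.natDegree_monicOP])
  rwa [hdeg] at h

variable [IsFiniteMeasure μ]

theorem orthonormal_toL2 (hφ : IsOPUC μ φ) (hμ : OnCircle μ) : Orthonormal ℂ (hμ.toL2 ∘ φ) := by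
  classical
  exact orthonormal_iff_ite.mpr fun m n => (hμ.inner_toL2 _ _).trans (hφ.orth m n)

theorem norm_toL2_eq_one (hφ : IsOPUC μ φ) (hμ : OnCircle μ) (n : ℕ) : ‖hμ.toL2 (φ n)‖ = 1 :=
  (hφ.orthonormal_toL2 hμ).norm_eq_one n

theorem inner_toL2_eq_zero_of_degree_lt (hφ : IsOPUC μ φ) (hμ : OnCircle μ) {P : ℂ[X]} {n : ℕ}
    (hP : P.degree < n) : ⟪hμ.toL2 P, hμ.toL2 (φ n)⟫_ℂ = 0 := by
  suffices ∀ m ≤ n, ∀ P : ℂ[X], P.degree < m → ⟪hμ.toL2 P, hμ.toL2 (φ n)⟫_ℂ = 0 from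
    this n le_rfl P hP
  intro m
  induction m with
  | zero => intro _ P hP; simp [degree_eq_bot.mp (Nat.WithBot.lt_zero_iff.mp hP)]
  | succ m ih =>
    intro hmn P hP
    have hPm : P.natDegree ≤ m := natDegree_le_of_degree_le (Order.le_of_lt_succ hP)
    have hφmn : ⟪hμ.toL2 (φ m), hμ.toL2 (φ n)⟫_ℂ = 0 :=
      (hφ.orthonormal_toL2 hμ).inner_eq_zero (by omega)
    rw [← sub_add_cancel P ((P.coeff m / (φ m).leadingCoeff) • φ m), map_add, inner_add_left,
      ih (by omega) _ (hφ.degree_sub_smul_lt hPm), map_smul, inner_smul_left, hφmn, mul_zero,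
      zero_add]

theorem inner_toL2_eq_coeff_div (hφ : IsOPUC μ φ) (hμ : OnCircle μ) {P : ℂ[X]} {n : ℕ}
    (hP : P.natDegree ≤ n) :
    ⟪hμ.toL2 (φ n), hμ.toL2 P⟫_ℂ = P.coeff n / (φ n).leadingCoeff := by
  conv_lhs => rw [← sub_add_cancel P ((P.coeff n / (φ n).leadingCoeff) • φ n)]
  rw [map_add, inner_add_right, ← inner_conj_symm,
    hφ.inner_toL2_eq_zero_of_degree_lt hμ (hφ.degree_sub_smul_lt hP), map_smul,
    inner_smul_right, inner_self_eq_norm_sq_to_K, hφ.norm_toL2_eq_one hμ]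
  simp

theorem norm_coeff_div_le_norm_toL2 (hφ : IsOPUC μ φ) (hμ : OnCircle μ) {P : ℂ[X]} {n : ℕ}
    (hP : P.natDegree ≤ n) : ‖P.coeff n‖ / ‖(φ n).leadingCoeff‖ ≤ ‖hμ.toL2 P‖ := by
  simpa [← norm_div, ← hφ.inner_toL2_eq_coeff_div hμ hP, hφ.norm_toL2_eq_one hμ] using
    norm_inner_le_norm (𝕜 := ℂ) (hμ.toL2 (φ n)) (hμ.toL2 P)

theorem norm_coeff_zero_div_le_norm_toL2 (hφ : IsOPUC μ φ) (hμ : OnCircle μ) {P : ℂ[X]} {n : ℕ}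
    (hP : P.natDegree ≤ n) : ‖P.coeff 0‖ / ‖(φ n).leadingCoeff‖ ≤ ‖hμ.toL2 P‖ := by
  rw [← RCLike.norm_conj, ← coeff_starPoly_self, ← hμ.norm_toL2_starPoly hP]
  exact hφ.norm_coeff_div_le_norm_toL2 hμ (natDegree_starPoly_le hP)

theorem norm_toL2_monicOP (hφ : IsOPUC μ φ) (hμ : OnCircle μ) (n : ℕ) :
    ‖hμ.toL2 (monicOP φ n)‖ = ‖(φ n).leadingCoeff‖⁻¹ := by
  rw [monicOP_eq_smul, map_smul, norm_smul, hφ.norm_toL2_eq_one hμ, mul_one, norm_inv]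

theorem inner_toL2_monicOP_eq_zero_of_degree_lt (hφ : IsOPUC μ φ) (hμ : OnCircle μ) {P : ℂ[X]}
    {n : ℕ} (hP : P.degree < n) : ⟪hμ.toL2 P, hμ.toL2 (monicOP φ n)⟫_ℂ = 0 := by
  rw [monicOP_eq_smul, map_smul, inner_smul_right, hφ.inner_toL2_eq_zero_of_degree_lt hμ hP,
    mul_zero]

theorem norm_toL2_monicOP_sq_eq (hφ : IsOPUC μ φ) (hμ : OnCircle μ) (n : ℕ) :
    ‖hμ.toL2 (monicOP φ n)‖ ^ 2 =
      ‖hμ.toL2 (X * monicOP φ n - monicOP φ (n + 1))‖ ^ 2 + ‖hμ.toL2 (monicOP φ (n + 1))‖ ^ 2 := by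
  have horth := hφ.inner_toL2_monicOP_eq_zero_of_degree_lt hμ (hφ.degree_X_mul_monicOP_sub_lt n)
  rw [← hμ.norm_toL2_X_mul, sq, sq, sq,
    ← norm_add_sq_eq_norm_sq_add_norm_sq_of_inner_eq_zero _ _ horth, ← map_add, sub_add_cancel]

theorem norm_verblunsky_div_le_norm_toL2 (hφ : IsOPUC μ φ) (hμ : OnCircle μ) (n : ℕ) :
    ‖verblunsky φ n‖ / ‖(φ n).leadingCoeff‖ ≤ ‖hμ.toL2 (X * monicOP φ n - monicOP φ (n + 1))‖ := by
  have hψ := natDegree_le_of_degree_le (Order.le_of_lt_succ (hφ.degree_X_mul_monicOP_sub_lt n))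
  convert hφ.norm_coeff_zero_div_le_norm_toL2 hμ hψ using 2
  rw [verblunsky, coeff_sub, coeff_X_mul_zero, zero_sub, norm_neg, norm_neg, RCLike.norm_conj,
    coeff_zero_eq_eval_zero]

theorem norm_verblunsky_sq_add_le_one (hφ : IsOPUC μ φ) (hμ : OnCircle μ) (n : ℕ) :
    ‖verblunsky φ n‖ ^ 2 + (‖(φ n).leadingCoeff‖ / ‖(φ (n + 1)).leadingCoeff‖) ^ 2 ≤ 1 := by
  set κ := ‖(φ n).leadingCoeff‖
  have hκ : 0 < κ := norm_pos_iff.mpr (hφ.leadingCoeff_ne_zero n)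
  have hrec := hφ.norm_toL2_monicOP_sq_eq hμ n
  rw [hφ.norm_toL2_monicOP hμ, hφ.norm_toL2_monicOP hμ] at hrec
  have hα := pow_le_pow_left₀ (by positivity) (hφ.norm_verblunsky_div_le_norm_toL2 hμ n) 2
  calc ‖verblunsky φ n‖ ^ 2 + (κ / ‖(φ (n + 1)).leadingCoeff‖) ^ 2
      = κ ^ 2 * ((‖verblunsky φ n‖ / κ) ^ 2 + ‖(φ (n + 1)).leadingCoeff‖⁻¹ ^ 2) := by
        field_simp
    _ ≤ κ ^ 2 * κ⁻¹ ^ 2 := by gcongr; linarith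
    _ = 1 := by field_simp

theorem mul_norm_leadingCoeff_div_le_norm_toL2_derivative (hφ : IsOPUC μ φ) (hμ : OnCircle μ)
    (n : ℕ) :
    (n + 1) * ‖(φ (n + 1)).leadingCoeff‖ / ‖(φ n).leadingCoeff‖ ≤
      ‖hμ.toL2 (derivative (φ (n + 1)))‖ := by
  have hD : (derivative (φ (n + 1))).natDegree ≤ n :=
    (natDegree_derivative_le _).trans (by rw [hφ.natDegree_eq, Nat.add_sub_cancel])
  convert hφ.norm_coeff_div_le_norm_toL2 hμ hD using 2
  rw [coeff_derivative, hφ.coeff_self, norm_mul, mul_comm]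
  norm_cast

theorem norm_verblunsky_le_sqrt (hφ : IsOPUC μ φ) (hμ : OnCircle μ) (n : ℕ) :
    ‖verblunsky φ n‖ ≤ √(1 - ((n + 1) / ‖hμ.toL2 (derivative (φ (n + 1)))‖) ^ 2) := by
  have hκ := norm_pos_iff.mpr (hφ.leadingCoeff_ne_zero n)
  have hκ' := norm_pos_iff.mpr (hφ.leadingCoeff_ne_zero (n + 1))
  have hD := hφ.mul_norm_leadingCoeff_div_le_norm_toL2_derivative hμ n
  have hD0 : 0 < ‖hμ.toL2 (derivative (φ (n + 1)))‖ := lt_of_lt_of_le (by positivity) hD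
  have hratio : (n + 1) / ‖hμ.toL2 (derivative (φ (n + 1)))‖ ≤
      ‖(φ n).leadingCoeff‖ / ‖(φ (n + 1)).leadingCoeff‖ := by
    rw [div_le_div_iff₀ hD0 hκ', mul_comm _ ‖hμ.toL2 _‖]
    rwa [div_le_iff₀ hκ] at hD
  refine Real.le_sqrt_of_sq_le ?_
  have hα := hφ.norm_verblunsky_sq_add_le_one hμ n
  have hsq : ((n + 1) / ‖hμ.toL2 (derivative (φ (n + 1)))‖) ^ 2 ≤
      (‖(φ n).leadingCoeff‖ / ‖(φ (n + 1)).leadingCoeff‖) ^ 2 := by gcongr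
  linarith

end IsOPUC

theorem stmt8_general (μ : Measure ℂ) [IsProbabilityMeasure μ] (hcirc : OnCircle μ)
    (φ : ℕ → Polynomial ℂ) (hφ : IsOPUC μ φ)
    (hnormal : NormalBehavior μ φ) :
    Tendsto (fun n : ℕ => verblunsky φ n) atTop (𝓝 0) := by
  have hD : Tendsto (fun n : ℕ => ((n : ℝ) + 1) / ‖hcirc.toL2 (derivative (φ (n + 1)))‖)
      atTop (𝓝 1) := by
    simpa only [Function.comp_def, inv_div, inv_one, ← hcirc.norm_toL2_eq_l2norm,
      Nat.cast_add_one] using (hnormal.comp (tendsto_add_atTop_nat 1)).inv₀ one_ne_zero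
  refine squeeze_zero_norm (hφ.norm_verblunsky_le_sqrt hcirc) ?_
  have hcont : Continuous fun x : ℝ => √(1 - x ^ 2) := by fun_prop
  simpa [Function.comp_def] using (hcont.tendsto 1).comp hD

/-- Normal `L²`-derivative behavior implies Nevai class: `α_n → 0`. -/
theorem stmt8 (μ : Measure ℂ) [IsProbabilityMeasure μ] (hcirc : OnCircle μ)
    (hnt : NontrivialSupport μ) (φ : ℕ → Polynomial ℂ) (hφ : IsOPUC μ φ)
    (hnormal : NormalBehavior μ φ) :
    Tendsto (fun n : ℕ => verblunsky φ n) atTop (𝓝 0) :=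
  stmt8_general μ hcirc φ hφ hnormal
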